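/- arXiv:2006.11831 — 4 statements merged into one kernel-verified Lean document; each statement's English description precedes it below -/
import Mathlib

section
/- H-decomposability is hereditary: if a dihypergraph H = (U, E) is H-decomposable, then for any nonempty subset W ⊆ U, the induced subhypergraph H[W] is H-decomposable. -/
variable {α : Type*} [DecidableEq α]

/-- A dihypergraph: finite vertex set `U`, edges `(B, h)` with nonempty body
`B ⊆ U` and head `h ∈ U \ B`. -/
structure Dihypergraph (α : Type*) [DecidableEq α] where
  U : Finset α
  E : Finset (Finset α × α)
  body_nonempty : ∀ e ∈ E, e.1.Nonempty
  body_sub : ∀ e ∈ E, e.1 ⊆ U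
  head_mem : ∀ e ∈ E, e.2 ∈ U
  head_notin : ∀ e ∈ E, e.2 ∉ e.1

namespace Dihypergraph

/-- Two vertices are body-connected if joined by a body-path: a chain of edge
bodies in which consecutive bodies share vertices (each vertex is
body-connected to itself). -/
def BodyConn (H : Dihypergraph α) (v v' : α) : Prop :=
  Relation.ReflTransGen (fun x y => ∃ e ∈ H.E, x ∈ e.1 ∧ y ∈ e.1) v v'

/-- A dihypergraph is body-connected if every pair of its vertices is body-connected. -/
def BodyConnected (H : Dihypergraph α) : Prop :=
  ∀ v ∈ H.U, ∀ v' ∈ H.U, H.BodyConn v v'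

/-- A split: a bipartition of the vertex set into two nonempty parts such that
every edge's body is entirely contained in one of the parts. -/
def IsSplit (H : Dihypergraph α) (U1 U2 : Finset α) : Prop :=
  U1.Nonempty ∧ U2.Nonempty ∧ U1 ∪ U2 = H.U ∧ Disjoint U1 U2 ∧
    ∀ e ∈ H.E, e.1 ⊆ U1 ∨ e.1 ⊆ U2

/-- Induced subhypergraph on `W`: keeps exactly the edges fully contained in `W`. -/
def induced (H : Dihypergraph α) (W : Finset α) : Dihypergraph α where
  U := W
  E := H.E.filter (fun e => e.1 ⊆ W ∧ e.2 ∈ W)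
  body_nonempty e he := H.body_nonempty e (Finset.mem_filter.mp he).1
  body_sub e he := (Finset.mem_filter.mp he).2.1
  head_mem e he := (Finset.mem_filter.mp he).2.2
  head_notin e he := H.head_notin e (Finset.mem_filter.mp he).1

/-- A body-connected component: a maximal (nonempty) subset of the vertex set
in which every pair of vertices is body-connected. -/
def IsBodyComponent (H : Dihypergraph α) (C : Finset α) : Prop :=
  C.Nonempty ∧ C ⊆ H.U ∧ (∀ v ∈ C, ∀ v' ∈ C, H.BodyConn v v') ∧
    ∀ C', C ⊆ C' → C' ⊆ H.U → (∀ v ∈ C', ∀ v' ∈ C', H.BodyConn v v') → C' = C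

/-- H-decomposability: either a single vertex, or there is a split whose two
induced subhypergraphs are both H-decomposable. -/
inductive HDecomposable : Dihypergraph α → Prop
  | single (H : Dihypergraph α) (h : H.U.card = 1) : HDecomposable H
  | split (H : Dihypergraph α) (U1 U2 : Finset α) (hs : H.IsSplit U1 U2)
      (h1 : HDecomposable (H.induced U1)) (h2 : HDecomposable (H.induced U2)) :
      HDecomposable H

/-- A set `F ⊆ U` is closed if every edge whose body lies in `F` has its head in `F`. -/
def Closed (H : Dihypergraph α) (F : Finset α) : Prop :=
  F ⊆ H.U ∧ ∀ e ∈ H.E, e.1 ⊆ F → e.2 ∈ F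

/-- One step of forward chaining. -/
def step (H : Dihypergraph α) (X : Finset α) : Finset α :=
  X ∪ (H.E.filter (fun e => e.1 ⊆ X)).image Prod.snd

end Dihypergraph

open Dihypergraph

lemma induced_induced (H : Dihypergraph α) {V W : Finset α} (h : W ⊆ V) :
    (H.induced V).induced W = H.induced W := by
  unfold Dihypergraph.induced
  simp only [Finset.filter_filter]
  congr 1
  apply Finset.filter_congr
  intro e _
  constructor
  · rintro ⟨_, hw⟩; exact hw
  · rintro ⟨h1, h2⟩; exact ⟨⟨h1.trans h, h h2⟩, h1, h2⟩

/-- H-decomposability is hereditary: every induced subhypergraph on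
a nonempty subset of an H-decomposable dihypergraph is H-decomposable. -/
theorem hDecomposable_hereditary (H : Dihypergraph α) (hd : HDecomposable H)
    (W : Finset α) (hW : W ⊆ H.U) (hne : W.Nonempty) :
    HDecomposable (H.induced W) := by
  induction hd generalizing W with
  | single H h =>
    obtain ⟨a, ha⟩ := Finset.card_eq_one.mp h
    have : W = {a} := by
      rcases Finset.subset_singleton_iff.mp (ha ▸ hW) with h' | h'
      · exact absurd h' hne.ne_empty
      · exact h'
    exact HDecomposable.single _ (by simp [Dihypergraph.induced, this])
  | split H U1 U2 hs h1 h2 ih1 ih2 =>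
    obtain ⟨hn1, hn2, hun, hdis, hedge⟩ := hs
    by_cases hc1 : (W ∩ U1).Nonempty
    · by_cases hc2 : (W ∩ U2).Nonempty
      · apply HDecomposable.split _ (W ∩ U1) (W ∩ U2)
        · refine ⟨hc1, hc2, ?_, ?_, ?_⟩
          · rw [← Finset.inter_union_distrib_left, hun]
            exact Finset.inter_eq_left.mpr hW
          · exact hdis.mono Finset.inter_subset_right Finset.inter_subset_right
          · intro e he
            simp only [Dihypergraph.induced, Finset.mem_filter] at he
            obtain ⟨heE, hbW, -⟩ := he
            rcases hedge e heE with h' | h'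
            · exact Or.inl (Finset.subset_inter hbW h')
            · exact Or.inr (Finset.subset_inter hbW h')
        · rw [induced_induced H Finset.inter_subset_left,
            ← induced_induced H (Finset.inter_subset_right : W ∩ U1 ⊆ U1)]
          exact ih1 _ Finset.inter_subset_right hc1
        · rw [induced_induced H Finset.inter_subset_left,
            ← induced_induced H (Finset.inter_subset_right : W ∩ U2 ⊆ U2)]
          exact ih2 _ Finset.inter_subset_right hc2
      · have hW1 : W ⊆ U1 := by
          intro x hx
          rcases Finset.mem_union.mp (hun ▸ hW hx) with h' | h'
          · exact h'
          · exact absurd ⟨x, Finset.mem_inter.mpr ⟨hx, h'⟩⟩ hc2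
        rw [← induced_induced H hW1]
        exact ih1 _ hW1 hne
    · have hW2 : W ⊆ U2 := by
        intro x hx
        rcases Finset.mem_union.mp (hun ▸ hW hx) with h' | h'
        · exact absurd ⟨x, Finset.mem_inter.mpr ⟨hx, h'⟩⟩ hc1
        · exact h'
      rw [← induced_induced H hW2]
      exact ih2 _ hW2 hne
end

section
/- Let (U1, U2) be a split of a dihypergraph H such that every crossing edge (B, h) (edge not contained in U1 or U2) has B ⊆ U1 (and hence h ∈ U2). Then the trace of F_H on U1 equals F1, i.e., {F ∩ U1 : F ∈ F_H} = F1, where F1 is the closure system of H[U1]. -/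
variable {α : Type*} [DecidableEq α]

open Dihypergraph

/-- For a split (U1, U2) in which every crossing edge has its body
in U1, the trace of F_H on U1 equals the closure system of H[U1]. -/
theorem trace_eq_of_bodies_left (H : Dihypergraph α) (U1 U2 : Finset α)
    (hs : H.IsSplit U1 U2)
    (hcr : ∀ e ∈ H.E, ¬ insert e.2 e.1 ⊆ U1 → ¬ insert e.2 e.1 ⊆ U2 → e.1 ⊆ U1) :
    (fun F : Finset α => F ∩ U1) '' {F : Finset α | H.Closed F} =
      {F : Finset α | (H.induced U1).Closed F} := by
  obtain ⟨h1ne, h2ne, hUnion, hdisj, hbodies⟩ := hs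
  ext F1
  simp only [Set.mem_image, Set.mem_setOf_eq]
  constructor
  · rintro ⟨F, ⟨hFU, hFcl⟩, rfl⟩
    refine ⟨Finset.inter_subset_right, ?_⟩
    intro e he hB
    rw [show (H.induced U1).E = H.E.filter (fun e => e.1 ⊆ U1 ∧ e.2 ∈ U1) from rfl, Finset.mem_filter] at he
    obtain ⟨heE, hB1, hh1⟩ := he
    exact Finset.mem_inter.mpr ⟨hFcl e heE (hB.trans Finset.inter_subset_left), hh1⟩
  · rintro ⟨hF1U, hF1cl⟩
    refine ⟨F1 ∪ U2, ⟨?_, ?_⟩, ?_⟩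
    · rw [← hUnion]; exact Finset.union_subset_union_left hF1U
    · intro e heE hB
      rcases hbodies e heE with hb1 | hb2
      · have hBF1 : e.1 ⊆ F1 := by
          intro x hx
          rcases Finset.mem_union.mp (hB hx) with h | h
          · exact h
          · exact absurd (hb1 hx) (Finset.disjoint_right.mp hdisj h)
        rcases Finset.mem_union.mp (hUnion ▸ H.head_mem e heE) with hh1 | hh2
        · have he' : e ∈ (H.induced U1).E :=
            Finset.mem_filter.mpr ⟨heE, hb1, hh1⟩
          exact Finset.mem_union_left _ (hF1cl e he' hBF1)
        · exact Finset.mem_union_right _ hh2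
      · by_cases hh2 : e.2 ∈ U2
        · exact Finset.mem_union_right _ hh2
        · have hh1 : e.2 ∈ U1 := by
            have := H.head_mem e heE
            rw [← hUnion] at this
            rcases Finset.mem_union.mp this with h | h
            · exact h
            · exact absurd h hh2
          have hn1 : ¬ insert e.2 e.1 ⊆ U1 := by
            intro hsub
            obtain ⟨x, hx⟩ := H.body_nonempty e heE
            exact Finset.disjoint_left.mp hdisj (hsub (Finset.mem_insert_of_mem hx)) (hb2 hx)
          have hn2 : ¬ insert e.2 e.1 ⊆ U2 := fun hsub =>
            Finset.disjoint_left.mp hdisj hh1 (hsub (Finset.mem_insert_self _ _))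
          have hb1 := hcr e heE hn1 hn2
          obtain ⟨x, hx⟩ := H.body_nonempty e heE
          exact absurd (hb1 hx) (Finset.disjoint_right.mp hdisj (hb2 hx))
    · apply Finset.Subset.antisymm
      · intro x hx
        rcases Finset.mem_inter.mp hx with ⟨hxF, hx1⟩
        rcases Finset.mem_union.mp hxF with h | h
        · exact h
        · exact absurd hx1 (Finset.disjoint_right.mp hdisj h)
      · intro x hx
        exact Finset.mem_inter.mpr ⟨Finset.mem_union_left _ hx, hF1U hx⟩
end

section
/- Let (U1, U2) be a split of a dihypergraph H such that every crossing edge has its body in U1 and head in U2. Then every closed set of H[U2] is a closed set of H restricted situation, namely F2 ⊆ F_H : U2 and in fact F_H : U2 = F2, where F2 is the closure system of H[U2] and F_H : U2 = {F ∩ U2 : F ∈ F_H}. Specifically, every F2 ∈ F2 (viewed as a subset of U) is itself a closed set of H. -/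
variable {α : Type*} [DecidableEq α]

open Dihypergraph

/-- For a split (U1, U2) in which every crossing edge has its body
in U1 (and head in U2), every closed set of H[U2] is a closed set of H, and the
trace of F_H on U2 equals the closure system of H[U2]. -/
theorem trace_eq_right_of_bodies_left (H : Dihypergraph α) (U1 U2 : Finset α)
    (hs : H.IsSplit U1 U2)
    (hcr : ∀ e ∈ H.E, ¬ insert e.2 e.1 ⊆ U1 → ¬ insert e.2 e.1 ⊆ U2 → e.1 ⊆ U1) :
    (∀ F2 : Finset α, (H.induced U2).Closed F2 → H.Closed F2) ∧
      (fun F : Finset α => F ∩ U2) '' {F : Finset α | H.Closed F} =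
        {F : Finset α | (H.induced U2).Closed F} := by
  obtain ⟨hn1, hn2, hunion, hdisj, hbodies⟩ := hs
  have hU2 : U2 ⊆ H.U := by rw [← hunion]; exact Finset.subset_union_right
  have key : ∀ F2 : Finset α, (H.induced U2).Closed F2 → H.Closed F2 := by
    rintro F2 ⟨hsub, hcl⟩
    refine ⟨hsub.trans hU2, ?_⟩
    intro e he hbody
    have hbU2 : e.1 ⊆ U2 := hbody.trans hsub
    obtain ⟨x, hx⟩ := H.body_nonempty e he
    have hbnot1 : ¬ e.1 ⊆ U1 := fun h =>
      Finset.disjoint_left.mp hdisj (h hx) (hbU2 hx)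
    have hhead : e.2 ∈ U2 := by
      by_cases h2 : insert e.2 e.1 ⊆ U2
      · exact h2 (Finset.mem_insert_self _ _)
      · by_cases h1 : insert e.2 e.1 ⊆ U1
        · exact absurd ((Finset.subset_insert _ _).trans h1) hbnot1
        · exact absurd (hcr e he h1 h2) hbnot1
    have heI : e ∈ (H.induced U2).E :=
      Finset.mem_filter.mpr ⟨he, hbU2, hhead⟩
    exact hcl e heI hbody
  refine ⟨key, Set.Subset.antisymm ?_ ?_⟩
  · rintro F2 ⟨F, hF, rfl⟩
    refine ⟨Finset.inter_subset_right, ?_⟩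
    intro e he hbody
    have he' := Finset.mem_filter.mp he
    have : e.2 ∈ F := hF.2 e he'.1 (hbody.trans Finset.inter_subset_left)
    exact Finset.mem_inter.mpr ⟨this, he'.2.2⟩
  · intro F2 hF2
    refine ⟨F2, key F2 hF2, ?_⟩
    simp only
    exact Finset.inter_eq_left.mpr hF2.1
end

section
/- Every closure system arising from a dihypergraph H with a split (U1, U2) is a meet-subsemilattice of the product of the closure systems of H[U1] and H[U2]: the inclusion F_H ⊆ F1 × F2 holds and F_H is closed under intersection, so the intersection of any two elements of F_H (taken inside F1 × F2, where meets are given by intersections of the corresponding unions) stays in F_H. -/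
variable {α : Type*} [DecidableEq α]

open Dihypergraph

/-- For a split (U1, U2), F_H is contained in F1 × F2 and is
closed under intersection, hence a meet-subsemilattice of the product. -/
theorem closedSets_meet_subsemilattice (H : Dihypergraph α) (U1 U2 : Finset α)
    (hs : H.IsSplit U1 U2) :
    (∀ F : Finset α, H.Closed F →
        ∃ A B : Finset α, (H.induced U1).Closed A ∧ (H.induced U2).Closed B ∧
          F = A ∪ B) ∧
      ∀ F F' : Finset α, H.Closed F → H.Closed F' → H.Closed (F ∩ F') := by
  obtain ⟨-, -, hUnion, -, -⟩ := hs
  constructor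
  · intro F hF
    refine ⟨F ∩ U1, F ∩ U2, ⟨Finset.inter_subset_right, ?_⟩,
      ⟨Finset.inter_subset_right, ?_⟩, ?_⟩
    · intro e he hsub
      simp only [induced, Finset.mem_filter] at he
      exact Finset.mem_inter.mpr ⟨hF.2 e he.1 (hsub.trans Finset.inter_subset_left),
        he.2.2⟩
    · intro e he hsub
      simp only [induced, Finset.mem_filter] at he
      exact Finset.mem_inter.mpr ⟨hF.2 e he.1 (hsub.trans Finset.inter_subset_left),
        he.2.2⟩
    · rw [← Finset.inter_union_distrib_left, hUnion]
      exact (Finset.inter_eq_left.mpr hF.1).symm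
  · intro F F' hF hF'
    refine ⟨Finset.inter_subset_left.trans hF.1, fun e he hsub => ?_⟩
    exact Finset.mem_inter.mpr ⟨hF.2 e he (hsub.trans Finset.inter_subset_left),
      hF'.2 e he (hsub.trans Finset.inter_subset_right)⟩
end
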